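/- Let (A,*) be a nonzero normal symmetric triality algebra with skew-symmetric map δ : A×A → stri(A,*). Then the space g(A,*) = t ⊕ ι₀(A) ⊕ ι₁(A) ⊕ ι₂(A), where t = Σ_{i=0}^{2} θ^i(δ(A,A)) ⊆ stri(A,*), with the anticommutative bracket defined by: t a subalgebra of stri(A,*), [(d₀,d₁,d₂), ι_i(x)] = ι_i(d_i(x)), [ι_i(x), ι_{i+1}(y)] = ι_{i+2}(x*y), and [ι_i(x), ι_i(y)] = θ^i(δ(x,y)), is a Lie algebra (the Jacobi identity holds). -/

import Mathlib

/-- The underlying space of `g(A,*) = t ⊕ ι₀(A) ⊕ ι₁(A) ⊕ ι₂(A)`: a pair consisting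
of a triple of endomorphisms (the `t`-component, inside `gl(A)³`) and a triple of
elements of `A` (the components `ι₀, ι₁, ι₂`). -/
abbrev gSpace (F : Type*) [Field F] (A : Type*) [AddCommGroup A] [Module F A] :=
  (ZMod 3 → Module.End F A) × (ZMod 3 → A)

/-- The anticommutative bracket on `g(A,*)`: `t` is a subalgebra of `stri(A,*)`,
`[(d₀,d₁,d₂), ιᵢ(x)] = ιᵢ(dᵢ(x))`, `[ιᵢ(x), ιᵢ₊₁(y)] = ιᵢ₊₂(x*y)` and
`[ιᵢ(x), ιᵢ(y)] = θ^i(δ(x,y))`. -/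
def gBracket {F : Type*} [Field F] {A : Type*} [AddCommGroup A] [Module F A]
    (mul : A →ₗ[F] A →ₗ[F] A) (δ : ZMod 3 → A →ₗ[F] A →ₗ[F] Module.End F A)
    (u v : gSpace F A) : gSpace F A :=
  (⁅u.1, v.1⁆ + fun j => ∑ i : ZMod 3, δ (j - i) (u.2 i) (v.2 i),
   fun k => u.1 k (v.2 k) - v.1 k (u.2 k)
     + mul (u.2 (k + 1)) (v.2 (k + 2)) - mul (v.2 (k + 1)) (u.2 (k + 2)))

/-- The subspace `t = θ⁰(δ(A,A)) + θ¹(δ(A,A)) + θ²(δ(A,A))`. -/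
def tSpan (F : Type*) [Field F] (A : Type*) [AddCommGroup A] [Module F A]
    (δ : ZMod 3 → A →ₗ[F] A →ₗ[F] Module.End F A) :
    Submodule F (ZMod 3 → Module.End F A) :=
  Submodule.span F {w | ∃ (i : ZMod 3) (x y : A), w = fun j => δ (j - i) x y}

/-! The `t`-component of the Jacobiator cancels by the Jacobi identity of `gl(A)³`, by
skew-symmetry of `δ` and by the cyclic identity (ii); the `ι`-components cancel by the
`stri` property of `t`, by (iv), (v) expressing `δ₁, δ₂` through `*`, and by (iii). Elements of
`t` act on `θ^m(δ(A,A))` as derivations by (i), which makes `t` closed under the bracket. -/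

section ZMod3

variable (k : ZMod 3)

lemma zmod3_add_one_add_one : k + 1 + 1 = k + 2 := by revert k; decide
lemma zmod3_add_one_add_two : k + 1 + 2 = k := by revert k; decide
lemma zmod3_add_two_add_one : k + 2 + 1 = k := by revert k; decide
lemma zmod3_add_two_add_two : k + 2 + 2 = k + 1 := by revert k; decide
lemma zmod3_sub_one : k - 1 = k + 2 := by revert k; decide
lemma zmod3_sub_two : k - 2 = k + 1 := by revert k; decide

lemma sum_zmod3_sub {M : Type*} [AddCommMonoid M] (φ : ZMod 3 → ZMod 3 → M) :
    ∑ i, φ (k - i) i = φ 0 k + φ 1 (k + 2) + φ 2 (k + 1) := by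
  rw [← (Equiv.subLeft k).sum_comp]
  refine (Fin.sum_univ_three _).trans ?_
  show φ (k - (k - 0)) (k - 0) + φ (k - (k - 1)) (k - 1) + φ (k - (k - 2)) (k - 2) = _
  rw [sub_sub_cancel, sub_sub_cancel, sub_sub_cancel, sub_zero, zmod3_sub_one, zmod3_sub_two]

lemma sum_zmod3_sub_bilin {R M N P : Type*} [CommSemiring R] [AddCommMonoid M] [AddCommMonoid N]
    [AddCommMonoid P] [Module R M] [Module R N] [Module R P] (δ : ZMod 3 → M →ₗ[R] N →ₗ[R] P)
    (a : ZMod 3 → M) (b : ZMod 3 → N) :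
    ∑ i, δ (k - i) (a i) (b i) =
      δ 0 (a k) (b k) + δ 1 (a (k + 2)) (b (k + 2)) + δ 2 (a (k + 1)) (b (k + 1)) :=
  sum_zmod3_sub k fun m i => δ m (a i) (b i)

end ZMod3

lemma lie_lie_add_lie_lie_add_lie_lie {L : Type*} [LieRing L] (x y z : L) :
    ⁅⁅x, y⁆, z⁆ + ⁅⁅y, z⁆, x⁆ + ⁅⁅z, x⁆, y⁆ = 0 := by
  linear_combination (norm := abel) -lie_jacobi x y z - lie_skew z ⁅x, y⁆ - lie_skew x ⁅y, z⁆
    - lie_skew y ⁅z, x⁆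

section Triality

-- `Module.End F A` only carries the ring commutator as bracket; this makes it a Lie ring.
attribute [local instance] LieRing.ofAssociativeRing

variable {F : Type*} [Field F] {A : Type*} [AddCommGroup A] [Module F A]

def stri (mul : A →ₗ[F] A →ₗ[F] A) : Submodule F (ZMod 3 → Module.End F A) where
  carrier := {d | ∀ i x y, d i (mul x y) = mul (d (i + 1) x) y + mul x (d (i + 2) y)}
  add_mem' {d e} hd he i x y := by
    simp only [Pi.add_apply, LinearMap.add_apply, hd i x y, he i x y, map_add]; abel
  zero_mem' i x y := by simp
  smul_mem' c d hd i x y := by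
    simp only [Pi.smul_apply, LinearMap.smul_apply, hd i x y, map_smul, smul_add]

/-- The triples `d` acting on every `θ^m(δ(x,y)) = fun j => δ (j - m) x y` as a derivation:
`⁅d, θ^m(δ(x,y))⁆ = θ^m(δ(d_m x, y)) + θ^m(δ(x, d_m y))`, written componentwise. -/
def deltaDerivations (δ : ZMod 3 → A →ₗ[F] A →ₗ[F] Module.End F A) :
    Submodule F (ZMod 3 → Module.End F A) where
  carrier := {d | ∀ i j x y, ⁅d j, δ i x y⁆ = δ i (d (j - i) x) y + δ i x (d (j - i) y)}
  add_mem' {d e} hd he i j x y := by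
    simp only [Pi.add_apply, LinearMap.add_apply, add_lie, hd i j x y, he i j x y, map_add]; abel
  zero_mem' i j x y := by simp
  smul_mem' c d hd i j x y := by
    simp only [Pi.smul_apply, LinearMap.smul_apply, smul_lie, hd i j x y, map_smul, smul_add]

variable {mul : A →ₗ[F] A →ₗ[F] A} {δ : ZMod 3 → A →ₗ[F] A →ₗ[F] Module.End F A}

lemma tSpan_le_stri
    (htri : ∀ (i : ZMod 3) (x y u v : A),
      δ i x y (mul u v) = mul (δ (i + 1) x y u) v + mul u (δ (i + 2) x y v)) :
    tSpan F A δ ≤ stri mul := by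
  refine Submodule.span_le.2 ?_
  rintro _ ⟨m, a, b, rfl⟩ j x y
  simpa only [sub_add_eq_add_sub] using htri (j - m) a b x y

lemma tSpan_le_deltaDerivations
    (hi : ∀ (i j : ZMod 3) (a b x y : A),
      ⁅δ i a b, δ j x y⁆ = δ j (δ (i - j) a b x) y + δ j x (δ (i - j) a b y)) :
    tSpan F A δ ≤ deltaDerivations δ := by
  refine Submodule.span_le.2 ?_
  rintro _ ⟨m, a, b, rfl⟩ i j x y
  simpa only [sub_right_comm] using hi (j - m) i a b x y

lemma lie_mem_tSpan {d e : ZMod 3 → Module.End F A} (hd : d ∈ deltaDerivations δ)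
    (he : e ∈ tSpan F A δ) : ⁅d, e⁆ ∈ tSpan F A δ := by
  induction he using Submodule.span_induction with
  | mem w hw =>
    obtain ⟨m, x, y, rfl⟩ := hw
    have h : ⁅d, fun j => δ (j - m) x y⁆ =
        (fun j => δ (j - m) (d m x) y) + (fun j => δ (j - m) x (d m y)) := by
      funext j
      simpa only [LieRing.lie_apply, Pi.add_apply, sub_sub_cancel] using hd (j - m) j x y
    rw [h]
    exact add_mem (Submodule.subset_span ⟨m, d m x, y, rfl⟩)
      (Submodule.subset_span ⟨m, x, d m y, rfl⟩)
  | zero => simp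
  | add p q _ _ hp hq => rw [lie_add]; exact add_mem hp hq
  | smul c p _ hp => rw [lie_smul]; exact Submodule.smul_mem _ _ hp

lemma gBracket_fst_mem_tSpan
    (hi : ∀ (i j : ZMod 3) (a b x y : A),
      ⁅δ i a b, δ j x y⁆ = δ j (δ (i - j) a b x) y + δ j x (δ (i - j) a b y))
    {u v : gSpace F A} (hu : u.1 ∈ tSpan F A δ) (hv : v.1 ∈ tSpan F A δ) :
    (gBracket mul δ u v).1 ∈ tSpan F A δ := by
  refine add_mem (lie_mem_tSpan (tSpan_le_deltaDerivations hi hu) hv) ?_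
  rw [← Finset.sum_fn]
  exact sum_mem fun i _ => Submodule.subset_span ⟨i, u.2 i, v.2 i, rfl⟩

lemma gBracket_anticomm (hskew : ∀ (i : ZMod 3) (x y : A), δ i x y = - δ i y x)
    (u v : gSpace F A) : gBracket mul δ u v = - gBracket mul δ v u := by
  refine Prod.ext (funext fun j => ?_) (funext fun k => ?_)
  · simp only [gBracket, Prod.fst_neg, Pi.neg_apply, Pi.add_apply, LieRing.lie_apply, neg_add,
      ← Finset.sum_neg_distrib]
    congr 1
    · exact (lie_skew _ _).symm
    · exact Finset.sum_congr rfl fun i _ => hskew _ _ _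
  · simp only [gBracket, Prod.snd_neg, Pi.neg_apply]
    abel

lemma delta_mul_cyclic (hskew : ∀ (i : ZMod 3) (x y : A), δ i x y = - δ i y x)
    (hii : ∀ x y z : A, δ 0 x (mul y z) + δ 2 y (mul z x) + δ 1 z (mul x y) = 0) (x y z : A) :
    δ 0 (mul x y) z + δ 2 (mul y z) x + δ 1 (mul z x) y = 0 := by
  rw [hskew 0, hskew 2, hskew 1]
  linear_combination (norm := abel) -hii z x y

lemma delta_lie_of_mem_deltaDerivations (hskew : ∀ (i : ZMod 3) (x y : A), δ i x y = - δ i y x)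
    {d : ZMod 3 → Module.End F A} (hd : d ∈ deltaDerivations δ) (i j : ZMod 3) (x y : A) :
    ⁅δ i x y, d j⁆ = δ i (d (j - i) y) x - δ i (d (j - i) x) y := by
  rw [← lie_skew, hd i j x y, hskew i x]
  abel

lemma gBracket_jacobi_fst (hskew : ∀ (i : ZMod 3) (x y : A), δ i x y = - δ i y x)
    (hii : ∀ x y z : A, δ 0 x (mul y z) + δ 2 y (mul z x) + δ 1 z (mul x y) = 0)
    {u v w : gSpace F A} (hu : u.1 ∈ deltaDerivations δ) (hv : v.1 ∈ deltaDerivations δ)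
    (hw : w.1 ∈ deltaDerivations δ) :
    (gBracket mul δ (gBracket mul δ u v) w).1 + (gBracket mul δ (gBracket mul δ v w) u).1
      + (gBracket mul δ (gBracket mul δ w u) v).1 = 0 := by
  obtain ⟨T, f⟩ := u
  obtain ⟨S, g⟩ := v
  obtain ⟨R, h⟩ := w
  funext j
  have cyc := delta_mul_cyclic hskew hii
  simp only [gBracket, Pi.add_apply, Pi.zero_apply, LieRing.lie_apply, add_lie,
    sum_zmod3_sub_bilin]
  simp only [map_add, map_sub, LinearMap.add_apply, LinearMap.sub_apply,
    delta_lie_of_mem_deltaDerivations hskew hu, delta_lie_of_mem_deltaDerivations hskew hv,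
    delta_lie_of_mem_deltaDerivations hskew hw, sub_zero, zmod3_sub_one, zmod3_sub_two,
    zmod3_add_one_add_one, zmod3_add_one_add_two, zmod3_add_two_add_one, zmod3_add_two_add_two]
  linear_combination (norm := abel) lie_lie_add_lie_lie_add_lie_lie (T j) (S j) (R j)
    + cyc (f (j + 1)) (g (j + 2)) (h j) + cyc (g (j + 1)) (h (j + 2)) (f j)
    + cyc (h (j + 1)) (f (j + 2)) (g j) - cyc (g (j + 1)) (f (j + 2)) (h j)
    - cyc (h (j + 1)) (g (j + 2)) (f j) - cyc (f (j + 1)) (h (j + 2)) (g j)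

lemma gBracket_jacobi_snd
    (hδ₀ : ∀ x y z : A, δ 0 x y z + δ 0 y z x + δ 0 z x y = 0)
    (hδ₁ : ∀ x y z : A, δ 1 x y z = mul (mul x z) y - mul (mul y z) x)
    (hδ₂ : ∀ x y z : A, δ 2 x y z = mul y (mul z x) - mul x (mul z y))
    {u v w : gSpace F A} (hu : u.1 ∈ stri mul) (hv : v.1 ∈ stri mul) (hw : w.1 ∈ stri mul) :
    (gBracket mul δ (gBracket mul δ u v) w).2 + (gBracket mul δ (gBracket mul δ v w) u).2
      + (gBracket mul δ (gBracket mul δ w u) v).2 = 0 := by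
  obtain ⟨T, f⟩ := u
  obtain ⟨S, g⟩ := v
  obtain ⟨R, h⟩ := w
  funext k
  simp only [gBracket, Pi.add_apply, Pi.zero_apply, Ring.lie_def, Pi.sub_apply, Pi.mul_apply,
    Module.End.mul_apply, map_add, map_sub, LinearMap.add_apply, LinearMap.sub_apply,
    sum_zmod3_sub_bilin]
  simp only [hu k, hv k, hw k, zmod3_add_one_add_one, zmod3_add_one_add_two,
    zmod3_add_two_add_one, zmod3_add_two_add_two, hδ₁, hδ₂]
  linear_combination (norm := abel) hδ₀ (f k) (g k) (h k)

end Triality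

theorem stmt11_general
    (F : Type*) [Field F]
    (A : Type*) [AddCommGroup A] [Module F A]
    (mul : A →ₗ[F] A →ₗ[F] A)
    (δ : ZMod 3 → A →ₗ[F] A →ₗ[F] Module.End F A)
    (hskew : ∀ (i : ZMod 3) (x y : A), δ i x y = - δ i y x)
    (htri : ∀ (i : ZMod 3) (x y u v : A),
      δ i x y (mul u v) = mul (δ (i + 1) x y u) v + mul u (δ (i + 2) x y v))
    (hi : ∀ (i j : ZMod 3) (a b x y : A),
      ⁅δ i a b, δ j x y⁆ = δ j (δ (i - j) a b x) y + δ j x (δ (i - j) a b y))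
    (hii : ∀ x y z : A, δ 0 x (mul y z) + δ 2 y (mul z x) + δ 1 z (mul x y) = 0)
    (hiii : ∀ x y z : A, δ 0 x y z + δ 0 y z x + δ 0 z x y = 0)
    (hiv : ∀ x y z : A, δ 1 x y z = mul (mul x z) y - mul (mul y z) x)
    (hv : ∀ x y z : A, δ 2 x y z = mul y (mul z x) - mul x (mul z y)) :
    (∀ u v : gSpace F A, u.1 ∈ tSpan F A δ → v.1 ∈ tSpan F A δ →
      (gBracket mul δ u v).1 ∈ tSpan F A δ) ∧
    (∀ u v : gSpace F A, gBracket mul δ u v = - gBracket mul δ v u) ∧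
    (∀ u v w : gSpace F A,
      u.1 ∈ tSpan F A δ → v.1 ∈ tSpan F A δ → w.1 ∈ tSpan F A δ →
      gBracket mul δ (gBracket mul δ u v) w + gBracket mul δ (gBracket mul δ v w) u
        + gBracket mul δ (gBracket mul δ w u) v = 0) := by
  have hder := tSpan_le_deltaDerivations hi
  have hstri := tSpan_le_stri htri
  refine ⟨fun u v hu hv => gBracket_fst_mem_tSpan hi hu hv, gBracket_anticomm hskew,
    fun u v w hu hv' hw => Prod.ext ?_ ?_⟩
  · exact gBracket_jacobi_fst hskew hii (hder hu) (hder hv') (hder hw)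
  · exact gBracket_jacobi_snd hiii hiv hv (hstri hu) (hstri hv') (hstri hw)

/-- For a nonzero normal symmetric triality algebra `(A,*)`, the bracket on
`g(A,*) = t ⊕ ι₀(A) ⊕ ι₁(A) ⊕ ι₂(A)` is closed on `g(A,*)`, anticommutative,
and satisfies the Jacobi identity: `g(A,*)` is a Lie algebra. -/
theorem stmt11
    (F : Type*) [Field F] (hchar : (2 : F) ≠ 0)
    (A : Type*) [AddCommGroup A] [Module F A] [Nontrivial A]
    (mul : A →ₗ[F] A →ₗ[F] A)
    (δ : ZMod 3 → A →ₗ[F] A →ₗ[F] Module.End F A)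
    (hskew : ∀ (i : ZMod 3) (x y : A), δ i x y = - δ i y x)
    (htri : ∀ (i : ZMod 3) (x y u v : A),
      δ i x y (mul u v) = mul (δ (i + 1) x y u) v + mul u (δ (i + 2) x y v))
    (hi : ∀ (i j : ZMod 3) (a b x y : A),
      ⁅δ i a b, δ j x y⁆ = δ j (δ (i - j) a b x) y + δ j x (δ (i - j) a b y))
    (hii : ∀ x y z : A, δ 0 x (mul y z) + δ 2 y (mul z x) + δ 1 z (mul x y) = 0)
    (hiii : ∀ x y z : A, δ 0 x y z + δ 0 y z x + δ 0 z x y = 0)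
    (hiv : ∀ x y z : A, δ 1 x y z = mul (mul x z) y - mul (mul y z) x)
    (hv : ∀ x y z : A, δ 2 x y z = mul y (mul z x) - mul x (mul z y)) :
    (∀ u v : gSpace F A, u.1 ∈ tSpan F A δ → v.1 ∈ tSpan F A δ →
      (gBracket mul δ u v).1 ∈ tSpan F A δ) ∧
    (∀ u v : gSpace F A, gBracket mul δ u v = - gBracket mul δ v u) ∧
    (∀ u v w : gSpace F A,
      u.1 ∈ tSpan F A δ → v.1 ∈ tSpan F A δ → w.1 ∈ tSpan F A δ →
      gBracket mul δ (gBracket mul δ u v) w + gBracket mul δ (gBracket mul δ v w) u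
        + gBracket mul δ (gBracket mul δ w u) v = 0) :=
  stmt11_general F A mul δ hskew htri hi hii hiii hiv hv
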